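/- arXiv:2406.18500 — 2 statements merged into one kernel-verified Lean document; each statement's English description precedes it below -/
import Mathlib

section
/- For all r ∈ ℝ and n ≥ 1, one has (φ_n'(r))^2 ≤ 4p·φ_n''(r)·φ_n(r). -/
noncomputable def phi (p : ℝ) (n : ℕ) (r : ℝ) : ℝ :=
  if |r| < n then |r| ^ p
  else (n : ℝ) ^ (p - 2) * (p * (p - 1) / 2) * (|r| - n) ^ 2
      + p * (n : ℝ) ^ (p - 1) * (|r| - n) + (n : ℝ) ^ p

/-!
On `(0, ∞)`, `φ_n` is `t ↦ t ^ p` for `t < n`, continued beyond `n` by its second-order Taylor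
polynomial at `n`; the two pieces glue with matching first and second derivatives, which gives
explicit formulas for `φ_n'` and `φ_n''` there. Below `n` the inequality reduces to `1 ≤ 4 (p - 1)`.
Beyond `n`, writing `s = t - n ≥ 0`, `u = n ^ (p - 2)`, `v = n ^ (p - 1)` and using
`u · n ^ p = v ²`, the difference of the two sides is `p ²` times a polynomial in `u s` and `v`
with nonnegative coefficients. Negative `r` reduce to `|r|` because `φ_n` is even, so `φ_n'` is odd
and `φ_n''` even; at `r = 0` both sides vanish.
-/

open Set Topology

namespace Function

section Deriv

variable {𝕜 F : Type*} [NontriviallyNormedField 𝕜] [NormedAddCommGroup F] [NormedSpace 𝕜 F]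
  {f : 𝕜 → F}

theorem Even.deriv (hf : f.Even) : (deriv f).Odd := fun x => by
  simpa [hf.eq] using deriv_comp_neg f (-x)

theorem Odd.deriv (hf : f.Odd) : (deriv f).Even := fun x => by
  simpa [hf.eq, deriv.neg] using (deriv_comp_neg f x).symm

end Deriv

theorem Even.apply_abs {β : Type*} {f : ℝ → β} (hf : f.Even) (x : ℝ) : f |x| = f x := by
  rcases abs_choice x with h | h <;> simp [h, hf.eq]

theorem Odd.sq_apply_abs {β : Type*} [Monoid β] [HasDistribNeg β] {f : ℝ → β} (hf : f.Odd)
    (x : ℝ) : f |x| ^ 2 = f x ^ 2 := by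
  rcases abs_choice x with h | h <;> simp [h, hf.eq]

end Function

theorem hasDerivAt_ite_lt {F : Type*} [NormedAddCommGroup F] [NormedSpace ℝ F]
    {g h g' h' : ℝ → F} {a : ℝ} (hg : ∀ x, HasDerivAt g (g' x) x)
    (hh : ∀ x, HasDerivAt h (h' x) x) (hga : g a = h a) (hga' : g' a = h' a) (x : ℝ) :
    HasDerivAt (fun y => if y < a then g y else h y) (if x < a then g' x else h' x) x := by
  rcases lt_trichotomy x a with hx | rfl | hx
  · rw [if_pos hx]
    exact (hg x).congr_of_eventuallyEq ((eventually_lt_nhds hx).mono fun y hy => if_pos hy)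
  · rw [if_neg (lt_irrefl x)]
    have hleft : HasDerivWithinAt (fun y => if y < x then g y else h y) (h' x) (Iic x) x := by
      refine (hga' ▸ hg x).hasDerivWithinAt.congr (fun y hy => ?_) (by simp [hga])
      rcases (mem_Iic.1 hy).lt_or_eq with hy | rfl
      · simp [hy]
      · simp [hga]
    have hright : HasDerivWithinAt (fun y => if y < x then g y else h y) (h' x) (Ici x) x :=
      (hh x).hasDerivWithinAt.congr (fun y hy => if_neg (not_lt.2 hy)) (if_neg (lt_irrefl x))
    simpa using hleft.union hright
  · rw [if_neg hx.not_gt]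
    exact (hh x).congr_of_eventuallyEq ((eventually_gt_nhds hx).mono fun y hy => if_neg hy.not_gt)

noncomputable def powExt (p a t : ℝ) : ℝ :=
  if t < a then t ^ p
  else a ^ (p - 2) * (p * (p - 1) / 2) * (t - a) ^ 2 + p * a ^ (p - 1) * (t - a) + a ^ p

noncomputable def powExtDeriv (p a t : ℝ) : ℝ :=
  if t < a then p * t ^ (p - 1) else a ^ (p - 2) * (p * (p - 1)) * (t - a) + p * a ^ (p - 1)

noncomputable def powExtDeriv2 (p a t : ℝ) : ℝ :=
  if t < a then p * (p - 1) * t ^ (p - 2) else p * (p - 1) * a ^ (p - 2)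

section PowExt

variable {p a : ℝ}

theorem hasDerivAt_powExt (hp : 1 ≤ p) (t : ℝ) :
    HasDerivAt (powExt p a) (powExtDeriv p a t) t := by
  unfold powExt powExtDeriv
  apply hasDerivAt_ite_lt
  · exact fun x => Real.hasDerivAt_rpow_const (Or.inr hp)
  · intro x
    have hx : HasDerivAt (fun y : ℝ => y - a) 1 x := (hasDerivAt_id' x).sub_const a
    exact ((((hx.pow 2).const_mul (a ^ (p - 2) * (p * (p - 1) / 2))).add
      (hx.const_mul (p * a ^ (p - 1)))).add_const (a ^ p)).congr_deriv (by norm_num; ring)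
  · simp
  · simp

theorem hasDerivAt_powExtDeriv (hp : 2 ≤ p) (t : ℝ) :
    HasDerivAt (powExtDeriv p a) (powExtDeriv2 p a t) t := by
  unfold powExtDeriv powExtDeriv2
  apply hasDerivAt_ite_lt
  · intro x
    have hx := Real.hasDerivAt_rpow_const (x := x) (Or.inr (by linarith : 1 ≤ p - 1))
    exact (hx.const_mul p).congr_deriv (by rw [sub_sub, one_add_one_eq_two]; ring)
  · intro x
    exact ((((hasDerivAt_id' x).sub_const a).const_mul (a ^ (p - 2) * (p * (p - 1)))).add_const
      (p * a ^ (p - 1))).congr_deriv (by ring)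
  · simp
  · rfl

theorem deriv_powExt (hp : 1 ≤ p) : deriv (powExt p a) = powExtDeriv p a :=
  funext fun t => (hasDerivAt_powExt hp t).deriv

theorem deriv_powExtDeriv (hp : 2 ≤ p) : deriv (powExtDeriv p a) = powExtDeriv2 p a :=
  funext fun t => (hasDerivAt_powExtDeriv hp t).deriv

theorem Real.rpow_sub_two_mul_rpow {t : ℝ} (ht : 0 ≤ t) (hp : p ≠ 1) :
    t ^ (p - 2) * t ^ p = (t ^ (p - 1)) ^ 2 := by
  rw [← Real.rpow_add' ht (by contrapose! hp; linarith), ← Real.rpow_mul_natCast ht]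
  congr 1
  push_cast
  ring

theorem sq_powExtDeriv_le (hp : 2 ≤ p) (ha : 0 ≤ a) {t : ℝ} (ht : 0 ≤ t) :
    powExtDeriv p a t ^ 2 ≤ 4 * p * powExtDeriv2 p a t * powExt p a t := by
  simp only [powExt, powExtDeriv, powExtDeriv2]
  split_ifs with hta
  · have key : 4 * p * (p * (p - 1) * t ^ (p - 2)) * t ^ p
        = 4 * (p - 1) * (p * t ^ (p - 1)) ^ 2 := by
      have htt := Real.rpow_sub_two_mul_rpow ht (by linarith : p ≠ 1)
      linear_combination (4 * p ^ 2 * (p - 1)) * htt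
    rw [key]
    nlinarith [sq_nonneg (p * t ^ (p - 1))]
  · set u := a ^ (p - 2)
    set v := a ^ (p - 1)
    set s := t - a
    have huv : u * a ^ p = v ^ 2 := Real.rpow_sub_two_mul_rpow ha (by linarith : p ≠ 1)
    have hu : 0 ≤ u := Real.rpow_nonneg ha _
    have hv : 0 ≤ v := Real.rpow_nonneg ha _
    have hs : 0 ≤ s := sub_nonneg.2 (not_lt.1 hta)
    have key : 4 * p * (p * (p - 1) * u) * (u * (p * (p - 1) / 2) * s ^ 2 + p * v * s + a ^ p)
        - (u * (p * (p - 1)) * s + p * v) ^ 2 = p ^ 2 * ((2 * p - 1) * (p - 1) ^ 2 * (u * s) ^ 2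
          + (4 * p - 2) * (p - 1) * (u * s * v) + (4 * p - 5) * v ^ 2) := by
      linear_combination (4 * p ^ 2 * (p - 1)) * huv
    have h1 : 0 ≤ (2 * p - 1) * (p - 1) ^ 2 * (u * s) ^ 2 :=
      mul_nonneg (mul_nonneg (by linarith) (sq_nonneg _)) (sq_nonneg _)
    have h2 : 0 ≤ (4 * p - 2) * (p - 1) * (u * s * v) :=
      mul_nonneg (mul_nonneg (by linarith) (by linarith)) (mul_nonneg (mul_nonneg hu hs) hv)
    have h3 : 0 ≤ (4 * p - 5) * v ^ 2 := mul_nonneg (by linarith) (sq_nonneg v)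
    nlinarith [mul_nonneg (sq_nonneg p) (add_nonneg (add_nonneg h1 h2) h3)]

end PowExt

theorem phi_eq_powExt_abs (p : ℝ) (n : ℕ) (r : ℝ) : phi p n r = powExt p n |r| := rfl

theorem phi_even (p : ℝ) (n : ℕ) : (phi p n).Even := fun r => by
  simp only [phi_eq_powExt_abs, abs_neg]

theorem phi_zero {p : ℝ} (hp : p ≠ 0) (n : ℕ) : phi p n 0 = 0 := by
  rcases n.eq_zero_or_pos with rfl | hn
  · simp [phi, hp]
  · simp [phi, hp, hn]

theorem phi_eventuallyEq_powExt (p : ℝ) (n : ℕ) {r : ℝ} (hr : 0 < r) :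
    phi p n =ᶠ[𝓝 r] powExt p n :=
  (eventually_gt_nhds hr).mono fun y hy => by rw [phi_eq_powExt_abs, abs_of_pos hy]

theorem stmt4_general (p : ℝ) (hp : 2 ≤ p) (n : ℕ) (r : ℝ) :
    (deriv (phi p n) r) ^ 2 ≤ 4 * p * deriv (deriv (phi p n)) r * phi p n r := by
  have heven := phi_even p n
  rcases (abs_nonneg r).eq_or_lt with hr | hr
  · obtain rfl : r = 0 := abs_eq_zero.1 hr.symm
    simp [heven.deriv.map_zero, phi_zero (by linarith : p ≠ 0)]
  · rw [← heven.deriv.sq_apply_abs, ← heven.deriv.deriv.apply_abs, ← heven.apply_abs]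
    have hloc := phi_eventuallyEq_powExt p n hr
    rw [hloc.deriv_eq, hloc.deriv.deriv_eq, hloc.eq_of_nhds, deriv_powExt (by linarith),
      deriv_powExtDeriv hp]
    exact sq_powExtDeriv_le hp n.cast_nonneg hr.le

theorem stmt4 (p : ℝ) (hp : 2 ≤ p) (n : ℕ) (hn : 1 ≤ n) (r : ℝ) :
    (deriv (phi p n) r) ^ 2 ≤ 4 * p * deriv (deriv (phi p n)) r * phi p n r :=
  stmt4_general p hp n r
end

section
/- For p > 2, all r ∈ ℝ and n ≥ 1, one has (φ_n''(r))^{p/(p-2)} ≤ (p(p-1))^{p/(p-2)}·φ_n(r). -/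
open Set Real

section Gluing

variable {F : Type*} [NormedAddCommGroup F] [NormedSpace ℝ F]

theorem hasDerivWithinAt_of_eqOn_of_isClosed {f g : ℝ → F} {f' : F} {s : Set ℝ} {x : ℝ}
    (hs : IsClosed s) (hfg : EqOn f g s) (hg : x ∈ s → HasDerivAt g f' x) :
    HasDerivWithinAt f f' s x := by
  by_cases hx : x ∈ s
  · exact (hg hx).hasDerivWithinAt.congr_of_mem (fun y hy => hfg hy) hx
  · exact HasFDerivWithinAt.of_notMem_closure (by rwa [hs.closure_eq])

theorem hasDerivAt_of_eqOn_Iic_Ici {f f₁ f₂ f' : ℝ → F} {a : ℝ} (x : ℝ)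
    (hf₁ : EqOn f f₁ (Iic a)) (hf₂ : EqOn f f₂ (Ici a))
    (h₁ : ∀ y ≤ a, HasDerivAt f₁ (f' y) y) (h₂ : ∀ y ≥ a, HasDerivAt f₂ (f' y) y) :
    HasDerivAt f (f' x) x := by
  have h := (hasDerivWithinAt_of_eqOn_of_isClosed isClosed_Iic hf₁ (h₁ x)).union
    (hasDerivWithinAt_of_eqOn_of_isClosed isClosed_Ici hf₂ (h₂ x))
  rwa [Iic_union_Ici, hasDerivWithinAt_univ] at h

theorem hasDerivAt_of_eqOn_Iic_Icc_Ici {f f₁ f₂ f₃ f' : ℝ → F} {a b : ℝ} (x : ℝ)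
    (hf₁ : EqOn f f₁ (Iic a)) (hf₂ : EqOn f f₂ (Icc a b)) (hf₃ : EqOn f f₃ (Ici b))
    (h₁ : ∀ y ≤ a, HasDerivAt f₁ (f' y) y) (h₂ : ∀ y ∈ Icc a b, HasDerivAt f₂ (f' y) y)
    (h₃ : ∀ y ≥ b, HasDerivAt f₃ (f' y) y) :
    HasDerivAt f (f' x) x := by
  have h := ((hasDerivWithinAt_of_eqOn_of_isClosed isClosed_Iic hf₁ (h₁ x)).union
    (hasDerivWithinAt_of_eqOn_of_isClosed isClosed_Icc hf₂ (h₂ x))).union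
    (hasDerivWithinAt_of_eqOn_of_isClosed isClosed_Ici hf₃ (h₃ x))
  have hcover : Iic a ∪ Icc a b ∪ Ici b = univ := by
    ext y
    simp only [mem_union, mem_Iic, mem_Icc, mem_Ici, mem_univ, iff_true]
    by_contra! h
    exact lt_asymm h.2 (h.1.2 h.1.1.le)
  rwa [hcover, hasDerivWithinAt_univ] at h

end Gluing

theorem hasDerivAt_abs_rpow_mul_self {q : ℝ} (hq : 0 < q) (x : ℝ) :
    HasDerivAt (fun y => |y| ^ q * y) ((q + 1) * |x| ^ q) x := by
  have hq1 : q + 1 ≠ 0 := by linarith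
  refine hasDerivAt_of_eqOn_Iic_Ici x (a := 0) (f₁ := fun y => -(-y) ^ (q + 1))
    (f₂ := fun y => y ^ (q + 1)) (f' := fun y => (q + 1) * |y| ^ q)
    (fun y hy => ?_) (fun y hy => ?_) (fun y hy => ?_) (fun y hy => ?_)
  · simp only [abs_of_nonpos (mem_Iic.1 hy), rpow_add_one' (neg_nonneg.2 (mem_Iic.1 hy)) hq1]
    ring
  · simp only [abs_of_nonneg (mem_Ici.1 hy), rpow_add_one' (mem_Ici.1 hy) hq1]
  · have h : HasDerivAt (fun y => -(-y) ^ (q + 1)) (-((q + 1) * (-y) ^ (q + 1 - 1) * -1)) y :=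
      ((hasDerivAt_rpow_const (Or.inr (by linarith))).comp y (hasDerivAt_neg y)).neg
    refine h.congr_deriv ?_
    rw [abs_of_nonpos hy, add_sub_cancel_right]
    ring
  · refine (hasDerivAt_rpow_const (Or.inr (by linarith))).congr_deriv ?_
    rw [abs_of_nonneg hy, add_sub_cancel_right]

def clip (n : ℕ) (y : ℝ) : ℝ := max (-n) (min y n)

section Clip

variable {n : ℕ} {y : ℝ}

theorem clip_of_le_neg (h : y ≤ -n) : clip n y = -n := by
  have : y ≤ n := h.trans (by linarith [n.cast_nonneg (α := ℝ)])
  rw [clip, min_eq_left this, max_eq_left h]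

theorem clip_of_mem_Icc (h : y ∈ Icc (-(n : ℝ)) n) : clip n y = y := by
  rw [clip, min_eq_left h.2, max_eq_right h.1]

theorem clip_of_le (h : (n : ℝ) ≤ y) : clip n y = n := by
  rw [clip, min_eq_right h, max_eq_right (neg_le_self n.cast_nonneg)]

end Clip

noncomputable def phiTaylor (p : ℝ) (n : ℕ) (c y : ℝ) : ℝ :=
  |c| ^ p + p * |c| ^ (p - 2) * c * (y - c) + (n : ℝ) ^ (p - 2) * (p * (p - 1) / 2) * (y - c) ^ 2

noncomputable def phiTaylorDeriv (p : ℝ) (n : ℕ) (c y : ℝ) : ℝ :=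
  p * |c| ^ (p - 2) * c + (n : ℝ) ^ (p - 2) * (p * (p - 1)) * (y - c)

noncomputable def phiDeriv (p : ℝ) (n : ℕ) (y : ℝ) : ℝ := phiTaylorDeriv p n (clip n y) y

noncomputable def phiDeriv2 (p : ℝ) (n : ℕ) (y : ℝ) : ℝ := p * (p - 1) * min |y| n ^ (p - 2)

section Phi

variable {p : ℝ} (n : ℕ)

theorem phiTaylor_self (y : ℝ) : phiTaylor p n y y = |y| ^ p := by
  simp [phiTaylor]

theorem phiTaylorDeriv_self (y : ℝ) : phiTaylorDeriv p n y y = p * |y| ^ (p - 2) * y := by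
  simp [phiTaylorDeriv]

theorem hasDerivAt_phiTaylor (c y : ℝ) :
    HasDerivAt (phiTaylor p n c) (phiTaylorDeriv p n c y) y := by
  have hlin := (hasDerivAt_id' y).sub_const c
  have h := ((hasDerivAt_const y (|c| ^ p)).add (hlin.const_mul (p * |c| ^ (p - 2) * c))).add
    ((hlin.pow 2).const_mul ((n : ℝ) ^ (p - 2) * (p * (p - 1) / 2)))
  refine h.congr_deriv ?_
  rw [phiTaylorDeriv]
  push_cast
  ring

theorem hasDerivAt_phiTaylorDeriv (c y : ℝ) :
    HasDerivAt (phiTaylorDeriv p n c) ((n : ℝ) ^ (p - 2) * (p * (p - 1))) y := by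
  have h := (hasDerivAt_const y (p * |c| ^ (p - 2) * c)).add
    (((hasDerivAt_id' y).sub_const c).const_mul ((n : ℝ) ^ (p - 2) * (p * (p - 1))))
  exact h.congr_deriv (by ring)

theorem phi_eq_phiTaylor_clip (hp : p ≠ 1) (y : ℝ) : phi p n y = phiTaylor p n (clip n y) y := by
  have hpow : (n : ℝ) ^ (p - 1) = (n : ℝ) ^ (p - 2) * n := by
    rw [← rpow_add_one' n.cast_nonneg (by contrapose! hp; linarith)]
    ring_nf
  rw [phi]
  split_ifs with h
  · rw [clip_of_mem_Icc (abs_le.1 h.le), phiTaylor_self]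
  · replace h := not_lt.1 h
    rcases le_total 0 y with hy | hy
    · rw [abs_of_nonneg hy] at h ⊢
      rw [clip_of_le h, phiTaylor, Nat.abs_cast, hpow]
      ring
    · rw [abs_of_nonpos hy] at h ⊢
      rw [clip_of_le_neg (by linarith), phiTaylor, abs_neg, Nat.abs_cast, hpow]
      ring

theorem hasDerivAt_phi (hp : 1 < p) (x : ℝ) : HasDerivAt (phi p n) (phiDeriv p n x) x := by
  have hphi := phi_eq_phiTaylor_clip n hp.ne'
  refine hasDerivAt_of_eqOn_Iic_Icc_Ici x (a := -n) (b := n) (f₁ := phiTaylor p n (-n))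
    (f₂ := fun y => |y| ^ p) (f₃ := phiTaylor p n n)
    (fun y hy => ?_) (fun y hy => ?_) (fun y hy => ?_)
    (fun y hy => ?_) (fun y hy => ?_) (fun y hy => ?_)
  · rw [hphi, clip_of_le_neg hy]
  · rw [hphi, clip_of_mem_Icc hy, phiTaylor_self]
  · rw [hphi, clip_of_le hy]
  · rw [phiDeriv, clip_of_le_neg hy]
    exact hasDerivAt_phiTaylor n _ y
  · rw [phiDeriv, clip_of_mem_Icc hy, phiTaylorDeriv_self]
    exact hasDerivAt_abs_rpow y hp
  · rw [phiDeriv, clip_of_le hy]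
    exact hasDerivAt_phiTaylor n _ y

theorem hasDerivAt_phiDeriv (hp : 2 < p) (x : ℝ) :
    HasDerivAt (phiDeriv p n) (phiDeriv2 p n x) x := by
  refine hasDerivAt_of_eqOn_Iic_Icc_Ici x (a := -n) (b := n) (f₁ := phiTaylorDeriv p n (-n))
    (f₂ := fun y => p * (|y| ^ (p - 2) * y)) (f₃ := phiTaylorDeriv p n n)
    (fun y hy => ?_) (fun y hy => ?_) (fun y hy => ?_)
    (fun y hy => ?_) (fun y hy => ?_) (fun y hy => ?_)
  · rw [phiDeriv, clip_of_le_neg hy]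
  · rw [phiDeriv, clip_of_mem_Icc hy, phiTaylorDeriv_self, mul_assoc]
  · rw [phiDeriv, clip_of_le hy]
  · rw [phiDeriv2, min_eq_right ((le_neg.1 hy).trans (neg_le_abs y)), mul_comm]
    exact hasDerivAt_phiTaylorDeriv n _ y
  · rw [phiDeriv2, min_eq_left (abs_le.2 hy)]
    exact ((hasDerivAt_abs_rpow_mul_self (by linarith) y).const_mul p).congr_deriv (by ring)
  · rw [phiDeriv2, min_eq_right (hy.trans (le_abs_self y)), mul_comm]
    exact hasDerivAt_phiTaylorDeriv n _ y

theorem min_abs_rpow_le_phi (hp : 1 ≤ p) (y : ℝ) : min |y| n ^ p ≤ phi p n y := by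
  rw [phi]
  split_ifs with h
  · rw [min_eq_left h.le]
  · replace h := not_lt.1 h
    rw [min_eq_right h]
    have hy : 0 ≤ |y| - n := sub_nonneg.2 h
    have hc : 0 ≤ p * (p - 1) / 2 := by nlinarith
    refine le_add_of_nonneg_left (add_nonneg ?_ ?_)
    · exact mul_nonneg (mul_nonneg (by positivity) hc) (sq_nonneg _)
    · exact mul_nonneg (mul_nonneg (by linarith) (by positivity)) hy

end Phi

theorem stmt5_general (p : ℝ) (hp : 2 < p) (n : ℕ) (r : ℝ) :
    (deriv (deriv (phi p n)) r) ^ (p / (p - 2)) ≤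
      (p * (p - 1)) ^ (p / (p - 2)) * phi p n r := by
  have hderiv : deriv (phi p n) = phiDeriv p n :=
    funext fun x => (hasDerivAt_phi n (by linarith) x).deriv
  have hpp : 0 ≤ p * (p - 1) := by nlinarith
  have hp2 : p - 2 ≠ 0 := by linarith
  rw [hderiv, (hasDerivAt_phiDeriv n hp r).deriv, phiDeriv2, mul_rpow hpp (by positivity),
    ← rpow_mul (by positivity), show (p - 2) * (p / (p - 2)) = p by field_simp]
  exact mul_le_mul_of_nonneg_left (min_abs_rpow_le_phi n (by linarith) r) (rpow_nonneg hpp _)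

theorem stmt5 (p : ℝ) (hp : 2 < p) (n : ℕ) (hn : 1 ≤ n) (r : ℝ) :
    (deriv (deriv (phi p n)) r) ^ (p / (p - 2)) ≤
      (p * (p - 1)) ^ (p / (p - 2)) * phi p n r :=
  stmt5_general p hp n r
end
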